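/- arXiv:2505.22151 — 2 statements merged into one kernel-verified Lean document; each statement's English description precedes it below -/
import Mathlib

section
/- For finite action sets, the joint advantage function telescopes across agents: for any ordering of n agents, A(τ, a) = Σ_{j=1}^n A^{i_j}(τ, a^{i_{1:j-1}}, a^{i_j}), where A^{i_{1:m}}(τ, a^{j_{1:k}}, a^{i_{1:m}}) = Q^{j_{1:k},i_{1:m}}(τ, a^{j_{1:k}}, a^{i_{1:m}}) − Q^{j_{1:k}}(τ, a^{j_{1:k}}). -/
/-- Multi-agent advantage decomposition (telescoping across agents):
for any ordering (permutation) of the `n` agents,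
`A(τ,a) = Q(τ,a) − V(τ) = Σ_j A^{i_j}(τ, a^{i_{1:j-1}}, a^{i_j})`,
where `A^{i_{1:m}}(τ, a^{j_{1:k}}, a^{i_{1:m}}) = Q^{j_{1:k},i_{1:m}} − Q^{j_{1:k}}`
and `Q^S(τ, a^S)` marginalizes the actions outside `S` under the product policy `π`. -/
theorem multi_agent_advantage_decomposition
    {n : ℕ} {A : Fin n → Type*} [∀ i, Fintype (A i)] [∀ i, DecidableEq (A i)]
    (Q : (∀ i, A i) → ℝ) (π : ∀ i, A i → ℝ)
    (hπnonneg : ∀ i b, 0 ≤ π i b) (hπsum : ∀ i, ∑ b, π i b = 1)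
    (σ : Equiv.Perm (Fin n)) (a : ∀ i, A i) :
    let QS : Finset (Fin n) → ℝ := fun S =>
      ∑ b : ∀ i, A i,
        (∏ i, if i ∈ S then (if b i = a i then (1 : ℝ) else 0) else π i (b i)) * Q b
    let pre : ℕ → Finset (Fin n) := fun j =>
      Finset.univ.filter (fun i => ∃ k : Fin n, (k : ℕ) < j ∧ σ k = i)
    Q a - QS ∅ = ∑ j ∈ Finset.range n, (QS (pre (j + 1)) - QS (pre j)) := by
  intro QS pre
  rw [Finset.sum_range_sub (fun j => QS (pre j))]
  have h0 : pre 0 = ∅ := by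
    simp [pre, Finset.filter_eq_empty_iff]
  have hn : pre n = Finset.univ := by
    ext i
    simp only [pre, Finset.mem_filter, Finset.mem_univ, true_and, iff_true]
    exact ⟨σ.symm i, (σ.symm i).isLt, σ.apply_symm_apply i⟩
  have huniv : QS Finset.univ = Q a := by
    simp only [QS, Finset.mem_univ, if_true]
    rw [Finset.sum_eq_single a]
    · simp
    · intro b _ hb
      have : ∃ i, b i ≠ a i := by
        by_contra h
        push_neg at h
        exact hb (funext h)
      obtain ⟨i, hi⟩ := this
      rw [Finset.prod_eq_zero (Finset.mem_univ i) (by simp [hi]), zero_mul]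
    · intro h
      exact absurd (Finset.mem_univ a) h
  rw [h0, hn, huniv]
end

section
/- The sum over permutations interpretation: because the telescoping decomposition A(τ,a) = Σ_j A^{i_j}(τ, a^{i_{1:j-1}}, a^{i_j}) holds for every permutation i_{1:n} of the agents, each per-agent advantage term A^{i_j} equals a difference of marginalized Q-values, and the total sum is independent of the chosen permutation. -/
/-- The telescoping advantage decomposition holds for *every* permutation of the agents:
for each permutation `σ`, `Σ_j A^{i_j}(τ, a^{i_{1:j-1}}, a^{i_j}) = Q(τ,a) − V(τ)`,
where each per-agent advantage is a difference of marginalized Q-values; hence the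
total sum is independent of the chosen permutation. -/
theorem advantage_decomposition_permutation_invariant
    {n : ℕ} {A : Fin n → Type*} [∀ i, Fintype (A i)] [∀ i, DecidableEq (A i)]
    (Q : (∀ i, A i) → ℝ) (π : ∀ i, A i → ℝ)
    (hπnonneg : ∀ i b, 0 ≤ π i b) (hπsum : ∀ i, ∑ b, π i b = 1)
    (a : ∀ i, A i) :
    let QS : Finset (Fin n) → ℝ := fun S =>
      ∑ b : ∀ i, A i,
        (∏ i, if i ∈ S then (if b i = a i then (1 : ℝ) else 0) else π i (b i)) * Q b
    let pre : Equiv.Perm (Fin n) → ℕ → Finset (Fin n) := fun σ j =>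
      Finset.univ.filter (fun i => ∃ k : Fin n, (k : ℕ) < j ∧ σ k = i)
    let S : Equiv.Perm (Fin n) → ℝ := fun σ =>
      ∑ j ∈ Finset.range n, (QS (pre σ (j + 1)) - QS (pre σ j))
    (∀ σ : Equiv.Perm (Fin n), S σ = Q a - QS ∅) ∧
    (∀ σ σ' : Equiv.Perm (Fin n), S σ = S σ') := by
  intro QS pre S
  have hpre0 : ∀ σ, pre σ 0 = ∅ := by
    intro σ
    simp [pre]
  have hpren : ∀ σ, pre σ n = Finset.univ := by
    intro σ
    ext i
    simp only [pre, Finset.mem_filter, Finset.mem_univ, true_and, iff_true]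
    exact ⟨σ.symm i, (σ.symm i).isLt, σ.apply_symm_apply i⟩
  have hQSuniv : QS Finset.univ = Q a := by
    simp only [QS, Finset.mem_univ, if_true]
    rw [Finset.sum_eq_single a]
    · simp
    · intro b _ hb
      have : ∃ i, b i ≠ a i := by
        by_contra h
        push_neg at h
        exact hb (funext h)
      obtain ⟨i, hi⟩ := this
      rw [Finset.prod_eq_zero (Finset.mem_univ i) (by simp [hi]), zero_mul]
    · intro h
      exact absurd (Finset.mem_univ a) h
  have hmain : ∀ σ, S σ = Q a - QS ∅ := by
    intro σ
    have := Finset.sum_range_sub (fun j => QS (pre σ j)) n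
    simp only [S]
    rw [this, hpre0, hpren, hQSuniv]
  exact ⟨hmain, fun σ σ' => by rw [hmain σ, hmain σ']⟩
end
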